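/- Let α be an irrational number not equivalent to (1+√5)/2 and not equivalent to (1+√17)/2. If in its continued fraction expansion aₙ ≤ 4 for all sufficiently large n and aₙ = 4 for infinitely many n, then 𝔨(α) ≤ 4/(3 + √2). -/

import Mathlib

open Filter

/-- The tails `αₙ = [aₙ; aₙ₊₁, …]` of the continued fraction of `α`. -/
noncomputable def cfTail (α : ℝ) : ℕ → ℝ
  | 0 => α
  | n + 1 => (Int.fract (cfTail α n))⁻¹

/-- The partial quotients `aₙ` of the continued fraction of `α`. -/
noncomputable def cfDigit (α : ℝ) (n : ℕ) : ℤ := ⌊cfTail α n⌋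

/-- Value `[a; b, c, …]` of a finite continued fraction given by a list. -/
noncomputable def finCF : List ℤ → ℝ
  | [] => 0
  | a :: l => (a : ℝ) + (finCF l)⁻¹

/-- `α*ₙ = [0; aₙ, aₙ₋₁, …, a₁]`. -/
noncomputable def cfStar (α : ℝ) (n : ℕ) : ℝ :=
  (finCF (((List.range' 1 n).reverse).map (cfDigit α)))⁻¹

/-- Numerators `pₙ` of the convergents of `α`. -/
noncomputable def cfNum (α : ℝ) : ℕ → ℤ
  | 0 => cfDigit α 0
  | 1 => cfDigit α 1 * cfDigit α 0 + 1
  | n + 2 => cfDigit α (n + 2) * cfNum α (n + 1) + cfNum α n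

/-- Denominators `qₙ` of the convergents of `α`. -/
noncomputable def cfDen (α : ℝ) : ℕ → ℤ
  | 0 => 1
  | 1 => cfDigit α 1
  | n + 2 => cfDigit α (n + 2) * cfDen α (n + 1) + cfDen α n

/-- The irrationality measure function `ψ_α^[2]` for "second best" approximations. -/
noncomputable def psi2 (α : ℝ) (t : ℝ) : ℝ :=
  sInf { x : ℝ | ∃ p q : ℤ, 1 ≤ q ∧ (q : ℝ) ≤ t ∧
    (∀ n : ℕ, (p, q) ≠ (cfNum α n, cfDen α n)) ∧ x = |(q : ℝ) * α - (p : ℝ)| }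

/-- The Diophantine constant `𝔨(α) = liminf_{t → ∞} t · ψ_α^[2](t)`. -/
noncomputable def kConst (α : ℝ) : ℝ := liminf (fun t : ℝ => t * psi2 α t) atTop

/-- Two numbers are equivalent if the tails of their continued fraction expansions
coincide: `a_{n+k} = b_{m+k}` for all `k ≥ 1`, for some positive integers `m`, `n`. -/
def CFEquiv (α β : ℝ) : Prop :=
  ∃ n m : ℕ, 0 < n ∧ 0 < m ∧ ∀ k : ℕ, 0 < k → cfDigit α (n + k) = cfDigit β (m + k)

/-- The spectrum `𝕃₂` of values of `𝔨`. -/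
def L2 : Set ℝ := { l : ℝ | ∃ α : ℝ, Irrational α ∧ l = kConst α }

/-- `κ¹ₙ(α) = (1 + α*ₙ₋₁)(αₙ − 1)/(αₙ + α*ₙ₋₁)`. -/
noncomputable def kappa1 (α : ℝ) (n : ℕ) : ℝ :=
  (1 + cfStar α (n - 1)) * (cfTail α n - 1) / (cfTail α n + cfStar α (n - 1))

/-- `κ²ₙ(α) = (1 − α*ₙ)(αₙ₊₁ + 1)/(αₙ₊₁ + α*ₙ)`. -/
noncomputable def kappa2 (α : ℝ) (n : ℕ) : ℝ :=
  (1 - cfStar α n) * (cfTail α (n + 1) + 1) / (cfTail α (n + 1) + cfStar α n)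

/-- `κ⁴ₙ(α) = 4/(αₙ + α*ₙ₋₁)`. -/
noncomputable def kappa4 (α : ℝ) (n : ℕ) : ℝ :=
  4 / (cfTail α n + cfStar α (n - 1))

/-! If `aₙ₊₂ = 4`, the pair `(2pₙ₊₁, 2qₙ₊₁)` is not a convergent, since convergents are coprime, and
`|2qₙ₊₁α − 2pₙ₊₁| = 2/(αₙ₊₂qₙ₊₁ + qₙ)`. So at `t = 2qₙ₊₁` we get
`t · ψ_α^[2](t) ≤ 4/(αₙ₊₂ + qₙ/qₙ₊₁)`. Once `1 ≤ aₙ ≤ 4`, both the tails `αₙ` and the ratios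
`qₙ₊₁/qₙ` are eventually at most `[4; 1, 4, 1, …] + ε = 2 + 2√2 + ε`, so whenever `aₙ₊₂ = 4`,
`αₙ₊₂ + qₙ/qₙ₊₁ = 4 + 1/αₙ₊₃ + qₙ/qₙ₊₁ ≥ 4 + 2/(2 + 2√2) − ε = 3 + √2 − ε`. -/

open Real Topology

noncomputable def cfErr (α : ℝ) (n : ℕ) : ℝ := cfDen α n * α - cfNum α n

section Convergents

variable {α : ℝ}

theorem irrational_cfTail (hα : Irrational α) : ∀ n, Irrational (cfTail α n)
  | 0 => hα
  | n + 1 => by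
    rw [cfTail, Int.fract]
    exact ((irrational_cfTail hα n).sub_intCast _).inv

theorem one_lt_cfTail (hα : Irrational α) (n : ℕ) : 1 < cfTail α (n + 1) := by
  have hfract : Int.fract (cfTail α n) ≠ 0 := by
    rw [Int.fract]
    exact ((irrational_cfTail hα n).sub_intCast _).ne_zero
  exact (one_lt_inv₀ ((Int.fract_nonneg _).lt_of_ne' hfract)).2 (Int.fract_lt_one _)

theorem cfTail_eq_add_inv (n : ℕ) : cfTail α n = cfDigit α n + (cfTail α (n + 1))⁻¹ := by
  rw [cfTail, inv_inv, cfDigit, Int.fract, add_sub_cancel]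

theorem one_le_cfDigit (hα : Irrational α) (n : ℕ) : 1 ≤ cfDigit α (n + 1) :=
  Int.le_floor.2 (by exact_mod_cast (one_lt_cfTail hα n).le)

theorem cfTail_lt_cfDigit_add_one (hα : Irrational α) (n : ℕ) :
    cfTail α n < cfDigit α n + 1 := by
  rw [cfTail_eq_add_inv n]
  gcongr
  exact inv_lt_one_of_one_lt₀ (one_lt_cfTail hα n)

theorem one_le_cfDen (hα : Irrational α) : ∀ n, 1 ≤ cfDen α n
  | 0 => le_rfl
  | 1 => one_le_cfDigit hα 0
  | n + 2 => by
    have h1 := one_le_cfDen hα (n + 1)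
    have h0 := one_le_cfDen hα n
    have ha := one_le_cfDigit hα (n + 1)
    show 1 ≤ cfDigit α (n + 2) * cfDen α (n + 1) + cfDen α n
    nlinarith

theorem cfDen_le_succ (hα : Irrational α) : ∀ n, cfDen α n ≤ cfDen α (n + 1)
  | 0 => one_le_cfDigit hα 0
  | n + 1 => by
    have h1 := one_le_cfDen hα (n + 1)
    have h0 := one_le_cfDen hα n
    have ha := one_le_cfDigit hα (n + 1)
    show cfDen α (n + 1) ≤ cfDigit α (n + 2) * cfDen α (n + 1) + cfDen α n
    nlinarith

theorem natCast_le_cfDen (hα : Irrational α) : ∀ n : ℕ, (n : ℤ) ≤ cfDen α n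
  | 0 => zero_le_one
  | 1 => one_le_cfDigit hα 0
  | n + 2 => by
    have h1 := natCast_le_cfDen hα (n + 1)
    have h0 := one_le_cfDen hα n
    have ha := one_le_cfDigit hα (n + 1)
    show ((n + 2 : ℕ) : ℤ) ≤ cfDigit α (n + 2) * cfDen α (n + 1) + cfDen α n
    push_cast at h1 ⊢
    nlinarith

theorem cfNum_mul_cfDen_sub (n : ℕ) :
    cfNum α (n + 1) * cfDen α n - cfNum α n * cfDen α (n + 1) = (-1) ^ n := by
  induction n with
  | zero => simp only [cfNum, cfDen]; ring
  | succ n ih =>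
    show (cfDigit α (n + 2) * cfNum α (n + 1) + cfNum α n) * cfDen α (n + 1)
      - cfNum α (n + 1) * (cfDigit α (n + 2) * cfDen α (n + 1) + cfDen α n) = _
    linear_combination -ih

theorem isCoprime_cfNum_cfDen : ∀ n, IsCoprime (cfNum α n) (cfDen α n)
  | 0 => isCoprime_one_right
  | n + 1 => ⟨(-1) ^ n * cfDen α n, -(-1) ^ n * cfNum α n, by
      have hsq : ((-1 : ℤ) ^ n) ^ 2 = 1 := by rw [← pow_mul, pow_mul']; norm_num
      linear_combination (-1) ^ n * cfNum_mul_cfDen_sub (α := α) n + hsq⟩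

theorem cfErr_add_two (n : ℕ) :
    cfErr α (n + 2) = cfDigit α (n + 2) * cfErr α (n + 1) + cfErr α n := by
  simp only [cfErr, cfNum, cfDen]
  push_cast
  ring

theorem cfTail_mul_cfErr (hα : Irrational α) (n : ℕ) :
    cfTail α (n + 2) * cfErr α (n + 1) = -cfErr α n := by
  induction n with
  | zero =>
    have h0 : α = cfDigit α 0 + (cfTail α 1)⁻¹ := cfTail_eq_add_inv 0
    have h1 := cfTail_eq_add_inv (α := α) 1
    have hy := mul_inv_cancel₀ (zero_lt_one.trans (one_lt_cfTail hα 0)).ne'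
    have hx := mul_inv_cancel₀ (zero_lt_one.trans (one_lt_cfTail hα 1)).ne'
    simp only [cfErr, cfNum, cfDen]
    push_cast
    linear_combination (cfTail α 2 * cfDigit α 1 + 1) * h0 - cfTail α 2 * (cfTail α 1)⁻¹ * h1
      - (cfTail α 1)⁻¹ * hx + cfTail α 2 * hy
  | succ n ih =>
    rw [cfTail_eq_add_inv (n + 2)] at ih
    rw [cfErr_add_two]
    have hinv := mul_inv_cancel₀ (zero_lt_one.trans (one_lt_cfTail hα (n + 2))).ne'
    linear_combination cfTail α (n + 3) * ih - cfErr α (n + 1) * hinv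

theorem abs_cfErr_succ (hα : Irrational α) (n : ℕ) :
    |cfErr α (n + 1)| = (cfTail α (n + 2) * cfDen α (n + 1) + cfDen α n)⁻¹ := by
  have hq : (1 : ℝ) ≤ cfDen α n := by exact_mod_cast one_le_cfDen hα n
  have hq' : (1 : ℝ) ≤ cfDen α (n + 1) := by exact_mod_cast one_le_cfDen hα (n + 1)
  have hD : 0 < cfTail α (n + 2) * cfDen α (n + 1) + cfDen α n := by
    nlinarith [one_lt_cfTail hα (n + 1)]
  have hdet : (cfNum α (n + 1) * cfDen α n - cfNum α n * cfDen α (n + 1) : ℝ) = (-1) ^ n := by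
    exact_mod_cast cfNum_mul_cfDen_sub n
  have hmul : cfErr α (n + 1) * (cfTail α (n + 2) * cfDen α (n + 1) + cfDen α n) = -(-1) ^ n := by
    have h := cfTail_mul_cfErr hα n
    simp only [cfErr] at h ⊢
    linear_combination cfDen α (n + 1) * h - hdet
  refine eq_inv_of_mul_eq_one_left ?_
  rw [← abs_of_pos hD, ← abs_mul, hmul, abs_neg, abs_pow, abs_neg, abs_one, one_pow]

theorem two_mul_ne_convergent (p q : ℤ) (m : ℕ) : (2 * p, 2 * q) ≠ (cfNum α m, cfDen α m) := by
  intro h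
  have hcop := isCoprime_cfNum_cfDen (α := α) m
  rw [← (Prod.mk.inj h).1, ← (Prod.mk.inj h).2] at hcop
  have := Int.isUnit_iff.1 (isCoprime_self.1 hcop.of_mul_left_left.of_mul_right_left)
  omega

theorem psi2_le {t : ℝ} {p q : ℤ} (hq : 1 ≤ q) (hqt : (q : ℝ) ≤ t)
    (hpq : ∀ n, (p, q) ≠ (cfNum α n, cfDen α n)) : psi2 α t ≤ |q * α - p| :=
  csInf_le ⟨0, by rintro _ ⟨p, q, -, -, -, rfl⟩; exact abs_nonneg _⟩ ⟨p, q, hq, hqt, hpq, rfl⟩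

theorem psi2_nonneg (t : ℝ) : 0 ≤ psi2 α t :=
  Real.sInf_nonneg (by rintro _ ⟨p, q, -, -, -, rfl⟩; exact abs_nonneg _)

theorem mul_psi2_two_mul_cfDen_le (hα : Irrational α) (n : ℕ) :
    2 * cfDen α (n + 1) * psi2 α (2 * cfDen α (n + 1))
      ≤ 4 / (cfTail α (n + 2) + (cfDen α (n + 1) / cfDen α n : ℝ)⁻¹) := by
  have hq := one_le_cfDen hα n
  have hq' := one_le_cfDen hα (n + 1)
  have hψ : psi2 α (2 * cfDen α (n + 1))
      ≤ 2 * (cfTail α (n + 2) * cfDen α (n + 1) + cfDen α n)⁻¹ := by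
    calc psi2 α (2 * cfDen α (n + 1))
        ≤ |((2 * cfDen α (n + 1) : ℤ) : ℝ) * α - (2 * cfNum α (n + 1) : ℤ)| :=
          psi2_le (by omega) (by push_cast; rfl) (two_mul_ne_convergent _ _)
      _ = |2 * cfErr α (n + 1)| := by rw [cfErr]; push_cast; ring_nf
      _ = 2 * |cfErr α (n + 1)| := by rw [abs_mul, abs_two]
      _ = _ := by rw [abs_cfErr_succ hα]
  have hq0 : (0 : ℝ) < cfDen α n := by exact_mod_cast hq
  have hq1 : (0 : ℝ) < cfDen α (n + 1) := by exact_mod_cast hq'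
  have ht := zero_lt_one.trans (one_lt_cfTail hα (n + 1))
  calc 2 * cfDen α (n + 1) * psi2 α (2 * cfDen α (n + 1))
      ≤ 2 * cfDen α (n + 1) * (2 * (cfTail α (n + 2) * cfDen α (n + 1) + cfDen α n)⁻¹) := by
        gcongr
    _ = _ := by field_simp; norm_num

theorem kConst_le_of_frequently {c : ℝ} (h : ∃ᶠ t in atTop, t * psi2 α t ≤ c) :
    kConst α ≤ c :=
  liminf_le_of_frequently_le h ⟨0, eventually_map.2 <| (eventually_ge_atTop 0).mono
    fun t ht => mul_nonneg ht (psi2_nonneg t)⟩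

end Convergents

-- `x ↦ 4 + 1/(1 + 1/x)` fixes `2 + 2√2 = [4; 1, 4, 1, …]` and contracts by `(3 + 2√2)² > 25` there.
theorem add_inv_add_inv_le {a b y δ : ℝ} (ha : a ≤ 4) (hb : 1 ≤ b) (hy : 0 < y) (hδ : 0 ≤ δ)
    (hyδ : y ≤ 2 + 2 * √2 + δ) : a + (b + y⁻¹)⁻¹ ≤ 2 + 2 * √2 + δ / 25 := by
  have hs : √2 ^ 2 = 2 := Real.sq_sqrt zero_le_two
  have hs' : 1.4 ≤ √2 := Real.le_sqrt_of_sq_le (by norm_num)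
  have hW : 0 < 2 + 2 * √2 + δ := by positivity
  calc a + (b + y⁻¹)⁻¹ ≤ 4 + (1 + (2 + 2 * √2 + δ)⁻¹)⁻¹ := by gcongr
    _ = 4 + (2 + 2 * √2 + δ) / (3 + 2 * √2 + δ) := by field_simp; ring
    _ ≤ 2 + 2 * √2 + δ / 25 := by
      rw [add_comm 4, ← le_sub_iff_add_le, div_le_iff₀ (by positivity)]
      nlinarith [mul_nonneg hδ hδ]

theorem four_div_le {u v δ : ℝ} (hu : 0 < u) (hv : 0 < v) (hδ : 0 ≤ δ)
    (huδ : u ≤ 2 + 2 * √2 + δ) (hvδ : v ≤ 2 + 2 * √2 + δ) :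
    4 / (4 + u⁻¹ + v⁻¹) ≤ 4 / (3 + √2) + δ := by
  have hs : √2 ^ 2 = 2 := Real.sq_sqrt zero_le_two
  have hs' : 1.4 ≤ √2 := Real.le_sqrt_of_sq_le (by norm_num)
  have hW : 0 < 2 + 2 * √2 + δ := by positivity
  calc 4 / (4 + u⁻¹ + v⁻¹) ≤ 4 / (4 + (2 + 2 * √2 + δ)⁻¹ + (2 + 2 * √2 + δ)⁻¹) := by gcongr
    _ = 2 * (2 + 2 * √2 + δ) / (5 + 4 * √2 + 2 * δ) := by field_simp; ring
    _ ≤ 4 / (3 + √2) + δ := by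
      rw [div_add' _ _ _ (by positivity), div_le_div_iff₀ (by positivity) (by positivity)]
      nlinarith [mul_nonneg hδ hδ, mul_nonneg (mul_nonneg hδ hδ) (by positivity : (0 : ℝ) ≤ √2),
        mul_nonneg hδ (by positivity : (0 : ℝ) ≤ √2)]

section BoundedDigits

variable {α : ℝ} {N : ℕ}

theorem cfDen_div_cfDen_eq (hα : Irrational α) (n : ℕ) :
    (cfDen α (n + 2) / cfDen α (n + 1) : ℝ)
      = cfDigit α (n + 2) + (cfDen α (n + 1) / cfDen α n : ℝ)⁻¹ := by
  have hq : (0 : ℝ) < cfDen α (n + 1) := by exact_mod_cast one_le_cfDen hα (n + 1)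
  rw [inv_div, div_eq_iff hq.ne', add_mul, div_mul_cancel₀ _ hq.ne']
  exact_mod_cast rfl

theorem cfTail_le_of_digit_le (hα : Irrational α) (hN : ∀ m ≥ N, cfDigit α m ≤ 4) (k : ℕ) :
    ∀ m ≥ N, cfTail α m ≤ 2 + 2 * √2 + 5 / 25 ^ k := by
  induction k with
  | zero =>
    intro m hm
    have hm4 : (cfDigit α m : ℝ) ≤ 4 := by exact_mod_cast hN m hm
    have := cfTail_lt_cfDigit_add_one hα m
    rw [pow_zero, div_one]
    linarith [Real.sqrt_nonneg 2]
  | succ k ih =>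
    intro m hm
    rw [cfTail_eq_add_inv m, cfTail_eq_add_inv (m + 1), pow_succ, ← div_div]
    exact add_inv_add_inv_le (by exact_mod_cast hN m hm) (by exact_mod_cast one_le_cfDigit hα m)
      (zero_lt_one.trans (one_lt_cfTail hα (m + 1))) (by positivity) (ih (m + 2) (by omega))

theorem cfDen_div_cfDen_le_of_digit_le (hα : Irrational α) (hN : ∀ m ≥ N, cfDigit α m ≤ 4)
    (k : ℕ) : ∀ n ≥ N + 2 * k,
      (cfDen α (n + 2) / cfDen α (n + 1) : ℝ) ≤ 2 + 2 * √2 + 5 / 25 ^ k := by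
  induction k with
  | zero =>
    intro n hn
    have hn4 : (cfDigit α (n + 2) : ℝ) ≤ 4 := by exact_mod_cast hN (n + 2) (by omega)
    have hq : (0 : ℝ) < cfDen α n := by exact_mod_cast one_le_cfDen hα n
    have hqq : (cfDen α n : ℝ) ≤ cfDen α (n + 1) := by exact_mod_cast cfDen_le_succ hα n
    have : (cfDen α (n + 1) / cfDen α n : ℝ)⁻¹ ≤ 1 := inv_le_one_of_one_le₀ ((one_le_div hq).2 hqq)
    rw [cfDen_div_cfDen_eq hα, pow_zero, div_one]
    linarith [Real.sqrt_nonneg 2]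
  | succ k ih =>
    intro n hn
    obtain ⟨m, rfl⟩ : ∃ m, n = m + 2 := ⟨n - 2, by omega⟩
    have hq : (0 : ℝ) < cfDen α (m + 1) := by exact_mod_cast one_le_cfDen hα (m + 1)
    have hq' : (0 : ℝ) < cfDen α (m + 2) := by exact_mod_cast one_le_cfDen hα (m + 2)
    rw [cfDen_div_cfDen_eq hα, cfDen_div_cfDen_eq hα, pow_succ, ← div_div]
    exact add_inv_add_inv_le (by exact_mod_cast hN _ (by omega))
      (by exact_mod_cast one_le_cfDigit hα _) (by positivity) (by positivity) (ih m (by omega))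

end BoundedDigits

theorem kConst_le_add_of_digit_le {α : ℝ} (hα : Irrational α) {N : ℕ}
    (hN : ∀ m ≥ N, cfDigit α m ≤ 4) (h4 : ∃ᶠ n in atTop, cfDigit α n = 4) (k : ℕ) :
    kConst α ≤ 4 / (3 + √2) + 5 / 25 ^ k := by
  refine kConst_le_of_frequently (frequently_atTop.2 fun T => ?_)
  obtain ⟨M, hM⟩ := exists_nat_ge T
  obtain ⟨m, hm, hm4⟩ := frequently_atTop.1 h4 (N + 2 * k + M + 3)
  obtain ⟨n, rfl⟩ : ∃ n, m = n + 3 := ⟨m - 3, by omega⟩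
  refine ⟨2 * cfDen α (n + 2), ?_, (mul_psi2_two_mul_cfDen_le hα (n + 1)).trans ?_⟩
  · have hMq : ((M : ℤ) : ℝ) ≤ cfDen α (n + 2) :=
      Int.cast_le.2 ((Int.ofNat_le.2 (by omega)).trans (natCast_le_cfDen hα (n + 2)))
    have hq : (1 : ℝ) ≤ cfDen α (n + 2) := by exact_mod_cast one_le_cfDen hα (n + 2)
    push_cast at hMq
    linarith
  · have hq : (0 : ℝ) < cfDen α (n + 1) := by exact_mod_cast one_le_cfDen hα (n + 1)
    have hq' : (0 : ℝ) < cfDen α (n + 2) := by exact_mod_cast one_le_cfDen hα (n + 2)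
    rw [cfTail_eq_add_inv (n + 3), hm4, Int.cast_ofNat]
    exact four_div_le (zero_lt_one.trans (one_lt_cfTail hα (n + 3))) (by positivity)
      (by positivity) (cfTail_le_of_digit_le hα hN k _ (by omega))
      (cfDen_div_cfDen_le_of_digit_le hα hN k n (by omega))

theorem stmt_12_general (α : ℝ) (hα : Irrational α)
    (hbd : ∀ᶠ n in atTop, cfDigit α n ≤ 4)
    (h4 : ∃ᶠ n in atTop, cfDigit α n = 4) :
    kConst α ≤ 4 / (3 + Real.sqrt 2) := by
  obtain ⟨N, hN⟩ := eventually_atTop.1 hbd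
  have hδ : Tendsto (fun k : ℕ => 4 / (3 + √2) + 5 / 25 ^ k) atTop (𝓝 (4 / (3 + √2))) := by
    simpa using tendsto_const_nhds.add (tendsto_const_nhds.div_atTop
      (tendsto_pow_atTop_atTop_of_one_lt (by norm_num : (1 : ℝ) < 25)))
  exact ge_of_tendsto' hδ (kConst_le_add_of_digit_le hα hN h4)

/-- If `α` is irrational, equivalent neither to `(1+√5)/2` nor to `(1+√17)/2`,
`aₙ ≤ 4` for all sufficiently large `n` and `aₙ = 4` for infinitely many `n`,
then `𝔨(α) ≤ 4/(3+√2)`. -/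
theorem stmt_12 (α : ℝ) (hα : Irrational α)
    (h5 : ¬ CFEquiv α ((1 + Real.sqrt 5) / 2))
    (h17 : ¬ CFEquiv α ((1 + Real.sqrt 17) / 2))
    (hbd : ∀ᶠ n in atTop, cfDigit α n ≤ 4)
    (h4 : ∃ᶠ n in atTop, cfDigit α n = 4) :
    kConst α ≤ 4 / (3 + Real.sqrt 2) :=
  stmt_12_general α hα hbd h4
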